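/- Let n, k be integers with n ≥ 1 and 1 ≤ k ≤ n, let G be a finite simple graph with vertex set {v_1,…,v_n}, and let G′ be the dominating-set reduction graph of (G,k). If i_1,…,i_k ∈ [n] are pairwise distinct indices such that {v_{i_1},…,v_{i_k}} is a dominating set of G, then the set {w_{i_1},…,w_{i_k}, w_{n+k+2}} is a (k+1)-independent set of G′ that is an isolated vertex of the token-sliding reconfiguration graph TS_{k+1}(G′), i.e. it has no neighbour in TS_{k+1}(G′). -/

import Mathlib

/-- An independent set of a graph, as a finset of pairwise non-adjacent vertices. -/
def IsIndepF {V : Type*} (H : SimpleGraph V) (I : Finset V) : Prop :=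
  ∀ u ∈ I, ∀ v ∈ I, ¬ H.Adj u v

/-- The token-sliding reconfiguration graph `TS_m(H)`. -/
def TSGraph {V : Type*} [DecidableEq V] (H : SimpleGraph V) (m : ℕ) :
    SimpleGraph {I : Finset V // I.card = m ∧ IsIndepF H I} where
  Adj I J := ∃ u v, J.1 \ I.1 = {u} ∧ I.1 \ J.1 = {v} ∧ H.Adj u v
  symm := by constructor; rintro I J ⟨u, v, h1, h2, h3⟩; exact ⟨v, u, h2, h1, h3.symm⟩
  loopless := by
    constructor
    rintro I ⟨u, v, h1, h2, h3⟩
    rw [Finset.sdiff_self] at h1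
    exact (Finset.singleton_ne_empty u) h1.symm

/-- `D` is a dominating set of `G`. -/
def IsDomSet {V : Type*} (G : SimpleGraph V) (D : Finset V) : Prop :=
  ∀ v : V, v ∈ D ∨ ∃ d ∈ D, G.Adj v d

/-- Vertices of the dominating-set reduction graph. -/
inductive RVert (n k : ℕ) : Type where
  | c : Fin (n + k + 1) → RVert n k
  | w : Fin (n + k + 2) → RVert n k
  | x : Fin (n + k + 2) → RVert n k
  | y : Fin (n + k + 2) → RVert n k
deriving DecidableEq

/-- The dominating-set reduction graph `G'` of `(G, k)` (0-based indices). -/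
def redGraph (n k : ℕ) (G : SimpleGraph (Fin n)) : SimpleGraph (RVert n k) :=
  SimpleGraph.fromRel (fun a b =>
    match a, b with
    | .c i, .c j => i ≠ j
    | .c i, .w j =>
        (∃ (hi : i.val < n) (hj : j.val < n), G.Adj ⟨i.val, hi⟩ ⟨j.val, hj⟩)
        ∨ (i.val = j.val)
        ∨ (i.val < n ∧ j.val = n + k + 1)
    | .x i, .y j => i = j
    | .x _, .c _ => True
    | _, _ => False)

/-!
Tokens of `{w_d : d ∈ D} ∪ {w_{n+k+2}}` can only slide to `c`-vertices. A vertex `c_i` with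
`i ≥ n` sees no token, while `c_i` with `i < n` sees `w_{n+k+2}` and, since `D` dominates `G`,
some `w_d` with `d ∈ D`: whichever of the two slides onto `c_i`, the other one stays adjacent to
it, so the result is not independent.
-/

theorem TSGraph.not_adj_of_forall_exists_ne {V : Type*} [DecidableEq V] {H : SimpleGraph V}
    {m : ℕ} (I : {I : Finset V // I.card = m ∧ IsIndepF H I})
    (h : ∀ u, ∀ v ∈ I.1, H.Adj u v → ∃ v' ∈ I.1, v' ≠ v ∧ H.Adj u v')
    (J : {I : Finset V // I.card = m ∧ IsIndepF H I}) :
    ¬ (TSGraph H m).Adj I J := by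
  rintro ⟨u, v, hJI, hIJ, huv⟩
  have hu : u ∈ J.1 := (Finset.mem_sdiff.mp (hJI ▸ Finset.mem_singleton_self u)).1
  have hv : v ∈ I.1 := (Finset.mem_sdiff.mp (hIJ ▸ Finset.mem_singleton_self v)).1
  obtain ⟨v', hv'I, hv'v, huv'⟩ := h u v hv huv
  have hv'J : v' ∈ J.1 := by
    by_contra hv'J
    have : v' ∈ I.1 \ J.1 := Finset.mem_sdiff.mpr ⟨hv'I, hv'J⟩
    exact hv'v (Finset.mem_singleton.mp (hIJ ▸ this))
  exact J.2.2 u hu v' hv'J huv'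

namespace redGraph

variable {n k : ℕ} {G : SimpleGraph (Fin n)}

theorem not_adj_w_w (a b : Fin (n + k + 2)) :
    ¬ (redGraph n k G).Adj (.w a) (.w b) := by
  rw [redGraph, SimpleGraph.fromRel_adj]
  rintro ⟨-, h | h⟩ <;> exact h

theorem adj_c_w_iff (i : Fin (n + k + 1)) (j : Fin (n + k + 2)) :
    (redGraph n k G).Adj (.c i) (.w j) ↔
      (∃ (hi : i.val < n) (hj : j.val < n), G.Adj ⟨i.val, hi⟩ ⟨j.val, hj⟩)
        ∨ i.val = j.val ∨ (i.val < n ∧ j.val = n + k + 1) := by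
  rw [redGraph, SimpleGraph.fromRel_adj]
  simp

theorem exists_eq_c_of_adj_w {u : RVert n k} {j : Fin (n + k + 2)}
    (h : (redGraph n k G).Adj u (.w j)) : ∃ i, u = .c i := by
  rw [redGraph, SimpleGraph.fromRel_adj] at h
  cases u with
  | c i => exact ⟨i, rfl⟩
  | _ => exact (h.2.elim id id).elim

abbrev wOfVertex (k : ℕ) (d : Fin n) : RVert n k :=
  .w (Fin.castLE (Nat.le_add_right n (k + 2)) d)

theorem wOfVertex_ne_w_last (d : Fin n) : wOfVertex k d ≠ .w (Fin.last _) := by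
  simp only [ne_eq, RVert.w.injEq, Fin.ext_iff, Fin.val_castLE, Fin.val_last]
  omega

/-- The tokens `w_d` (`d ∈ D`) and `w_{n+k+2}`, which is `w (Fin.last _)` with 0-based indices. -/
def wSet (k : ℕ) (D : Finset (Fin n)) : Finset (RVert n k) :=
  D.image (wOfVertex k) ∪ {.w (Fin.last (n + k + 1))}

theorem mem_wSet {D : Finset (Fin n)} {x : RVert n k} :
    x ∈ wSet k D ↔ (∃ d ∈ D, x = wOfVertex k d) ∨ x = .w (Fin.last _) := by
  simp only [wSet, Finset.mem_union, Finset.mem_image, Finset.mem_singleton, eq_comm]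

theorem card_wSet (D : Finset (Fin n)) : (wSet k D).card = D.card + 1 := by
  rw [wSet, Finset.card_union_of_disjoint, Finset.card_singleton,
    Finset.card_image_of_injective]
  · intro a b h
    simpa only [Fin.ext_iff, RVert.w.injEq, Fin.val_castLE] using h
  · simp only [Finset.disjoint_singleton_right, Finset.mem_image, not_exists, not_and]
    exact fun d _ ↦ wOfVertex_ne_w_last d

theorem isIndepF_wSet (D : Finset (Fin n)) : IsIndepF (redGraph n k G) (wSet k D) := by
  intro u hu v hv
  rcases mem_wSet.mp hu with ⟨d, -, rfl⟩ | rfl <;>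
    rcases mem_wSet.mp hv with ⟨d', -, rfl⟩ | rfl <;> exact not_adj_w_w _ _

theorem adj_c_w_last (i : Fin (n + k + 1)) (hi : i.val < n) :
    (redGraph n k G).Adj (.c i) (.w (Fin.last _)) :=
  (adj_c_w_iff i _).mpr (Or.inr (Or.inr ⟨hi, rfl⟩))

theorem exists_adj_c_of_isDomSet {D : Finset (Fin n)} (hD : IsDomSet G D)
    (i : Fin (n + k + 1)) (hi : i.val < n) :
    ∃ d ∈ D, (redGraph n k G).Adj (.c i) (wOfVertex k d) := by
  rcases hD ⟨i.val, hi⟩ with hiD | ⟨d, hd, hid⟩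
  · exact ⟨_, hiD, (adj_c_w_iff _ _).mpr (Or.inr (Or.inl rfl))⟩
  · exact ⟨d, hd, (adj_c_w_iff _ _).mpr (Or.inl ⟨hi, d.isLt, hid⟩)⟩

theorem not_adj_c_of_mem_wSet {D : Finset (Fin n)} (i : Fin (n + k + 1)) (hi : n ≤ i.val)
    {v : RVert n k} (hv : v ∈ wSet k D) : ¬ (redGraph n k G).Adj (.c i) v := by
  have := i.isLt
  rcases mem_wSet.mp hv with ⟨d, -, rfl⟩ | rfl
  · rw [adj_c_w_iff, Fin.val_castLE]
    have := d.isLt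
    rintro (⟨_, -⟩ | _ | ⟨_, -⟩) <;> omega
  · rw [adj_c_w_iff, Fin.val_last]
    rintro (⟨_, -⟩ | _ | ⟨_, -⟩) <;> omega

theorem exists_ne_adj_of_mem_wSet {D : Finset (Fin n)} (hD : IsDomSet G D)
    {u v : RVert n k} (hv : v ∈ wSet k D) (huv : (redGraph n k G).Adj u v) :
    ∃ v' ∈ wSet k D, v' ≠ v ∧ (redGraph n k G).Adj u v' := by
  obtain ⟨i, rfl⟩ : ∃ i, u = .c i := by
    rcases mem_wSet.mp hv with ⟨d, -, rfl⟩ | rfl <;> exact exists_eq_c_of_adj_w huv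
  by_cases hi : i.val < n
  · obtain ⟨d, hd, hid⟩ := exists_adj_c_of_isDomSet hD i hi
    by_cases hvl : v = .w (Fin.last _)
    · exact ⟨_, mem_wSet.mpr (Or.inl ⟨d, hd, rfl⟩), hvl ▸ wOfVertex_ne_w_last d, hid⟩
    · exact ⟨_, mem_wSet.mpr (Or.inr rfl), Ne.symm hvl, adj_c_w_last i hi⟩
  · exact (not_adj_c_of_mem_wSet i (by omega) hv huv).elim

end redGraph

theorem dominatingSet_gives_isolated_vertex
    (n k : ℕ) (G : SimpleGraph (Fin n))
    (f : Fin k → Fin n) (hf : Function.Injective f)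
    (hdom : IsDomSet G (Finset.image f Finset.univ)) :
    ∃ hI : (Finset.image (fun t : Fin k =>
              RVert.w (n := n) (k := k) (Fin.castLE (by omega) (f t))) Finset.univ
            ∪ {RVert.w (Fin.last (n + k + 1))}).card = k + 1 ∧
           IsIndepF (redGraph n k G)
            (Finset.image (fun t : Fin k =>
              RVert.w (n := n) (k := k) (Fin.castLE (by omega) (f t))) Finset.univ
            ∪ {RVert.w (Fin.last (n + k + 1))}),
      ∀ J, ¬ (TSGraph (redGraph n k G) (k + 1)).Adj
        ⟨Finset.image (fun t : Fin k =>
              RVert.w (n := n) (k := k) (Fin.castLE (by omega) (f t))) Finset.univ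
            ∪ {RVert.w (Fin.last (n + k + 1))}, hI⟩ J := by
  have hS : Finset.image (fun t ↦ redGraph.wOfVertex k (f t)) Finset.univ
      ∪ {RVert.w (Fin.last (n + k + 1))} = redGraph.wSet k (Finset.image f Finset.univ) := by
    rw [redGraph.wSet, Finset.image_image]
    rfl
  have hcard : (Finset.image f Finset.univ).card = k := by
    rw [Finset.card_image_of_injective _ hf, Finset.card_univ, Fintype.card_fin]
  refine ⟨⟨by rw [hS, redGraph.card_wSet, hcard], hS ▸ redGraph.isIndepF_wSet _⟩,
    fun J ↦ TSGraph.not_adj_of_forall_exists_ne _ ?_ J⟩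
  dsimp only
  rw [hS]
  exact fun _ _ hv huv ↦ redGraph.exists_ne_adj_of_mem_wSet hdom hv huv
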